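/- arXiv:2406.16053 — 2 statements merged into one kernel-verified Lean document; each statement's English description precedes it below -/
import Mathlib

section
/- For A of full row rank and a nonempty face F of Y⁰ = {y : ‖Aᵀy‖_∞ ≤ 1}, the polyhedral cone S_F defined by the sign/complementarity conditions indexed by (𝒜⁺(F), 𝒜⁰(F), 𝒜⁻(F)) admits the parametric representation S_F = {(λ, Ax + λy, x) : λ ≥ 0, x ∈ cl W(𝒜⁺(F), 𝒜⁰(F), 𝒜⁻(F)), y ∈ F}, where W(I⁺,I⁰,I⁻) = {x : x_i > 0 ∀i ∈ I⁺, x_i = 0 ∀i ∈ I⁰, x_i < 0 ∀i ∈ I⁻}. -/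
open Set

noncomputable section

variable {m n : ℕ}

/-- Euclidean distance between two vectors. -/
def en {k : ℕ} (x x' : Fin k → ℝ) : ℝ := Real.sqrt (∑ i, (x i - x' i) ^ 2)

/-- The ℓ₁ norm. -/
def l1 {k : ℕ} (x : Fin k → ℝ) : ℝ := ∑ i, |x i|

/-- Squared Euclidean norm. -/
def sqnorm {k : ℕ} (y : Fin k → ℝ) : ℝ := ∑ i, (y i) ^ 2

/-- `A_iᵀ y`, the dot product of the `i`-th column of `A` with `y`. -/
def colDot (A : Matrix (Fin m) (Fin n) ℝ) (i : Fin n) (y : Fin m → ℝ) : ℝ := ∑ k, A k i * y k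

/-- The dual feasible set `Y⁰ = {y : ‖Aᵀy‖_∞ ≤ 1}`. -/
def Ydual (A : Matrix (Fin m) (Fin n) ℝ) : Set (Fin m → ℝ) := {y | ∀ i, |colDot A i y| ≤ 1}

/-- `F` is a face of `C`: the argmax set of a linear functional over `C`. -/
def IsFaceOf (C F : Set (Fin m → ℝ)) : Prop :=
  ∃ v : Fin m → ℝ, F = {y | y ∈ C ∧ ∀ z ∈ C, ∑ k, v k * z k ≤ ∑ k, v k * y k}

/-- `𝒜⁺(F)`. -/
def Aplus (A : Matrix (Fin m) (Fin n) ℝ) (F : Set (Fin m → ℝ)) : Set (Fin n) :=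
  {i | ∀ y ∈ F, colDot A i y = 1}

/-- `𝒜⁻(F)`. -/
def Aminus (A : Matrix (Fin m) (Fin n) ℝ) (F : Set (Fin m → ℝ)) : Set (Fin n) :=
  {i | ∀ y ∈ F, colDot A i y = -1}

/-- `𝒜⁰(F)`. -/
def Azero (A : Matrix (Fin m) (Fin n) ℝ) (F : Set (Fin m → ℝ)) : Set (Fin n) :=
  {i | ∃ y ∈ F, -1 < colDot A i y ∧ colDot A i y < 1}

/-- Solution set of the extended ℓ₁ regularization problem:
basis pursuit when `lam = 0`, Lasso-type problem when `lam > 0`. -/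
def Sol (A : Matrix (Fin m) (Fin n) ℝ) (lam : ℝ) (b : Fin m → ℝ) : Set (Fin n → ℝ) :=
  if lam = 0 then
    {x | A.mulVec x = b ∧ ∀ z, A.mulVec z = b → l1 x ≤ l1 z}
  else
    {x | ∀ z, l1 x + 1 / (2 * lam) * sqnorm (A.mulVec x - b) ≤
          l1 z + 1 / (2 * lam) * sqnorm (A.mulVec z - b)}

/-- Graph of the solution multifunction `S`. -/
def gphS (A : Matrix (Fin m) (Fin n) ℝ) : Set (ℝ × (Fin m → ℝ) × (Fin n → ℝ)) :=
  {p | 0 ≤ p.1 ∧ p.2.2 ∈ Sol A p.1 p.2.1}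

/-- `A_iᵀ(b − Ax)`. -/
def resid (A : Matrix (Fin m) (Fin n) ℝ) (b : Fin m → ℝ) (x : Fin n → ℝ) (i : Fin n) : ℝ :=
  colDot A i (b - A.mulVec x)

/-- The polyhedral cone `S_F` associated with a face `F` of `Y⁰`. -/
def SFace (A : Matrix (Fin m) (Fin n) ℝ) (F : Set (Fin m → ℝ)) :
    Set (ℝ × (Fin m → ℝ) × (Fin n → ℝ)) :=
  {p | 0 ≤ p.1 ∧
    (∀ i ∈ Aplus A F, 0 ≤ p.2.2 i ∧ resid A p.2.1 p.2.2 i = p.1) ∧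
    (∀ i ∈ Azero A F, p.2.2 i = 0 ∧ |resid A p.2.1 p.2.2 i| ≤ p.1) ∧
    (∀ i ∈ Aminus A F, p.2.2 i ≤ 0 ∧ resid A p.2.1 p.2.2 i = -p.1)}

/-- `cl W(I⁺, I⁰, I⁻)`. -/
def clW (Ip I0 Im : Set (Fin n)) : Set (Fin n → ℝ) :=
  {x | (∀ i ∈ Ip, 0 ≤ x i) ∧ (∀ i ∈ I0, x i = 0) ∧ (∀ i ∈ Im, x i ≤ 0)}

/-- `W(I⁺, I⁰, I⁻)`. -/
def Wset (Ip I0 Im : Set (Fin n)) : Set (Fin n → ℝ) :=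
  {x | (∀ i ∈ Ip, 0 < x i) ∧ (∀ i ∈ I0, x i = 0) ∧ (∀ i ∈ Im, x i < 0)}

/-- The projection `D_F` of `S_F` onto the `(λ, b)` coordinates. -/
def DFace (A : Matrix (Fin m) (Fin n) ℝ) (F : Set (Fin m → ℝ)) : Set (ℝ × (Fin m → ℝ)) :=
  (fun p => (p.1, p.2.1)) '' SFace A F

/-- The convex subdifferential of the ℓ₁ norm. -/
def l1subdiff {k : ℕ} (x : Fin k → ℝ) : Set (Fin k → ℝ) :=
  {v | ∀ z, l1 x + ∑ i, v i * (z i - x i) ≤ l1 z}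

/-- Polyhedral subset of `ℝ × ℝ^m × ℝ^n`: a finite intersection of closed half-spaces. -/
def IsPolyhedral3 (s : Set (ℝ × (Fin m → ℝ) × (Fin n → ℝ))) : Prop :=
  ∃ (k : ℕ) (a : Fin k → ℝ × (Fin m → ℝ) × (Fin n → ℝ)) (β : Fin k → ℝ),
    s = {p | ∀ j, (a j).1 * p.1 + (∑ t, (a j).2.1 t * p.2.1 t) +
          (∑ t, (a j).2.2 t * p.2.2 t) ≤ β j}

/-- Lipschitz continuity of a set-valued map on a set `X`, with constant `κ`. -/
def LipOn {a b : ℕ} (G : (Fin a → ℝ) → Set (Fin b → ℝ)) (X : Set (Fin a → ℝ)) (κ : ℝ) : Prop :=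
  (∀ x ∈ X, (G x).Nonempty ∧ IsClosed (G x)) ∧
  ∀ x ∈ X, ∀ x' ∈ X, ∀ y' ∈ G x', ∃ y ∈ G x, en y' y ≤ κ * en x' x


section
variable {m n : ℕ}

lemma dot_lin (v y z : Fin m → ℝ) (a b : ℝ) :
    ∑ k, v k * (a * y k + b * z k) = a * (∑ k, v k * y k) + b * ∑ k, v k * z k := by
  rw [Finset.mul_sum, Finset.mul_sum, ← Finset.sum_add_distrib]
  exact Finset.sum_congr rfl (fun k _ => by ring)

lemma colDot_lin (A : Matrix (Fin m) (Fin n) ℝ) (i : Fin n) (y z : Fin m → ℝ) (a b : ℝ) :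
    colDot A i (fun k => a * y k + b * z k) = a * colDot A i y + b * colDot A i z :=
  dot_lin _ y z a b

lemma faceSub (A : Matrix (Fin m) (Fin n) ℝ) {F : Set (Fin m → ℝ)}
    (hface : IsFaceOf (Ydual A) F) : F ⊆ Ydual A := by
  obtain ⟨v, rfl⟩ := hface; exact fun y hy => hy.1

lemma mid_mem (A : Matrix (Fin m) (Fin n) ℝ) {F : Set (Fin m → ℝ)}
    (hface : IsFaceOf (Ydual A) F) {y₁ y₂ : Fin m → ℝ} (h1 : y₁ ∈ F) (h2 : y₂ ∈ F) :
    (fun k => (1/2 : ℝ) * y₁ k + (1/2 : ℝ) * y₂ k) ∈ F := by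
  obtain ⟨v, rfl⟩ := hface
  constructor
  · intro i
    rw [colDot_lin]
    calc |1/2 * colDot A i y₁ + 1/2 * colDot A i y₂|
        ≤ |1/2 * colDot A i y₁| + |1/2 * colDot A i y₂| := abs_add_le _ _
      _ ≤ 1/2 * 1 + 1/2 * 1 := by
          rw [abs_mul, abs_mul, abs_of_nonneg (by norm_num : (0:ℝ) ≤ 1/2)]
          gcongr
          · exact h1.1 i
          · exact h2.1 i
      _ = 1 := by norm_num
  · intro z hz
    rw [dot_lin]
    have := h1.2 z hz
    have := h2.2 z hz
    linarith

lemma mid_colDot (A : Matrix (Fin m) (Fin n) ℝ) (i : Fin n) (y₁ y₂ : Fin m → ℝ) :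
    colDot A i (fun k => (1/2 : ℝ) * y₁ k + (1/2 : ℝ) * y₂ k)
      = 1/2 * colDot A i y₁ + 1/2 * colDot A i y₂ := colDot_lin _ _ _ _ _ _

lemma cover (A : Matrix (Fin m) (Fin n) ℝ) {F : Set (Fin m → ℝ)}
    (hface : IsFaceOf (Ydual A) F) (i : Fin n) :
    i ∈ Aplus A F ∨ i ∈ Azero A F ∨ i ∈ Aminus A F := by
  by_cases hp : i ∈ Aplus A F
  · exact Or.inl hp
  by_cases hm : i ∈ Aminus A F
  · exact Or.inr (Or.inr hm)
  refine Or.inr (Or.inl ?_)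
  simp only [Aplus, mem_setOf_eq, not_forall] at hp
  simp only [Aminus, mem_setOf_eq, not_forall] at hm
  obtain ⟨y₁, hy₁F, hy₁⟩ := hp
  obtain ⟨y₂, hy₂F, hy₂⟩ := hm
  have hb₁ := (faceSub A hface hy₁F) i
  have hb₂ := (faceSub A hface hy₂F) i
  rw [abs_le] at hb₁ hb₂
  by_cases h : colDot A i y₁ = -1
  · refine ⟨_, mid_mem A hface hy₁F hy₂F, ?_⟩
    rw [mid_colDot, h]
    constructor
    · nlinarith [lt_of_le_of_ne hb₂.1 (Ne.symm hy₂)]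
    · nlinarith [hb₂.2]
  · exact ⟨y₁, hy₁F, lt_of_le_of_ne hb₁.1 (Ne.symm h), lt_of_le_of_ne hb₁.2 hy₁⟩

lemma interiorPt (A : Matrix (Fin m) (Fin n) ℝ) {F : Set (Fin m → ℝ)}
    (hface : IsFaceOf (Ydual A) F) (hne : F.Nonempty) :
    ∃ w ∈ F, ∀ i ∈ Azero A F, |colDot A i w| < 1 := by
  suffices h : ∀ s : Finset (Fin n), ∃ w ∈ F, ∀ i ∈ s, i ∈ Azero A F → |colDot A i w| < 1 by
    obtain ⟨w, hwF, hw⟩ := h Finset.univ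
    exact ⟨w, hwF, fun i hi => hw i (Finset.mem_univ i) hi⟩
  intro s
  induction s using Finset.induction_on with
  | empty => obtain ⟨w, hw⟩ := hne; exact ⟨w, hw, by simp⟩
  | @insert i s his ih =>
    obtain ⟨w, hwF, hw⟩ := ih
    by_cases hi : i ∈ Azero A F
    · obtain ⟨y, hyF, hy1, hy2⟩ := hi
      refine ⟨_, mid_mem A hface hwF hyF, ?_⟩
      intro j hj hjz
      rw [mid_colDot, abs_lt]
      rcases Finset.mem_insert.1 hj with rfl | hjs
      · have hb := (faceSub A hface hwF) j
        rw [abs_le] at hb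
        constructor <;> nlinarith
      · have h1 := hw j hjs hjz
        have hb := (faceSub A hface hyF) j
        rw [abs_le] at hb
        rw [abs_lt] at h1
        constructor <;> nlinarith
    · refine ⟨w, hwF, fun j hj hjz => ?_⟩
      rcases Finset.mem_insert.1 hj with rfl | hjs
      · exact absurd hjz hi
      · exact hw j hjs hjz

lemma tLemma (s : Finset (Fin n)) (c d : Fin n → ℝ) :
    ∃ t : ℝ, 0 < t ∧ ∀ i ∈ s, |c i| < 1 → |c i| + t * |d i| ≤ 1 := by
  induction s using Finset.induction_on with
  | empty => exact ⟨1, one_pos, by simp⟩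
  | @insert i s his ih =>
    obtain ⟨t, ht, hts⟩ := ih
    by_cases hci : |c i| < 1
    swap
    · refine ⟨t, ht, fun j hj hcj => ?_⟩
      rcases Finset.mem_insert.1 hj with rfl | hjs
      · exact absurd hcj hci
      · exact hts j hjs hcj
    refine ⟨min t ((1 - |c i|) / (|d i| + 1)), ?_, ?_⟩
    · exact lt_min ht (div_pos (by linarith) (by positivity))
    · intro j hj hcj
      rcases Finset.mem_insert.1 hj with rfl | hjs
      · have h1 : min t ((1 - |c j|) / (|d j| + 1)) ≤ (1 - |c j|) / (|d j| + 1) := min_le_right _ _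
        have h2 : (0:ℝ) < |d j| + 1 := by positivity
        have h3 : (1 - |c j|) / (|d j| + 1) * |d j| ≤ 1 - |c j| := by
          rw [div_mul_eq_mul_div, div_le_iff₀ h2]
          nlinarith [abs_nonneg (d j)]
        nlinarith [abs_nonneg (d j), min_le_right t ((1 - |c j|) / (|d j| + 1))]
      · have := hts j hjs hcj
        nlinarith [abs_nonneg (d j), min_le_left t ((1 - |c i|) / (|d i| + 1)), abs_nonneg (c j)]


lemma colDot_smul (A : Matrix (Fin m) (Fin n) ℝ) (i : Fin n) (c : ℝ) (u : Fin m → ℝ) :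
    colDot A i (fun k => c * u k) = c * colDot A i u := by
  unfold colDot; rw [Finset.mul_sum]
  exact Finset.sum_congr rfl (fun k _ => by ring)

lemma colDot_comb (A : Matrix (Fin m) (Fin n) ℝ) (i : Fin n) (w z : Fin m → ℝ) (t : ℝ) :
    colDot A i (fun k => w k + t * (w k - z k))
      = colDot A i w + t * (colDot A i w - colDot A i z) := by
  unfold colDot
  rw [mul_sub, Finset.mul_sum, Finset.mul_sum, ← Finset.sum_sub_distrib, ← Finset.sum_add_distrib]
  exact Finset.sum_congr rfl (fun k _ => by ring)

lemma dot_comb (v w z : Fin m → ℝ) (t : ℝ) :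
    ∑ k, v k * (w k + t * (w k - z k))
      = (∑ k, v k * w k) + t * ((∑ k, v k * w k) - ∑ k, v k * z k) := by
  rw [mul_sub, Finset.mul_sum, Finset.mul_sum, ← Finset.sum_sub_distrib, ← Finset.sum_add_distrib]
  exact Finset.sum_congr rfl (fun k _ => by ring)

lemma mem_face (A : Matrix (Fin m) (Fin n) ℝ) {F : Set (Fin m → ℝ)}
    (hface : IsFaceOf (Ydual A) F) (hne : F.Nonempty) (z : Fin m → ℝ)
    (hz0 : ∀ i, |colDot A i z| ≤ 1)
    (hzp : ∀ i ∈ Aplus A F, colDot A i z = 1)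
    (hzm : ∀ i ∈ Aminus A F, colDot A i z = -1) : z ∈ F := by
  obtain ⟨w, hwF, hw⟩ := interiorPt A hface hne
  obtain ⟨t, ht, hts⟩ := tLemma Finset.univ (fun i => colDot A i w)
    (fun i => colDot A i w - colDot A i z)
  set u : Fin m → ℝ := fun k => w k + t * (w k - z k) with hu
  have huY : u ∈ Ydual A := by
    intro i
    rw [hu, colDot_comb]
    rcases cover A hface i with hi | hi | hi
    · rw [hzp i hi, hi w hwF]; norm_num
    · have h1 := hw i hi
      calc |colDot A i w + t * (colDot A i w - colDot A i z)|
          ≤ |colDot A i w| + t * |colDot A i w - colDot A i z| := by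
            refine (abs_add_le _ _).trans ?_
            rw [abs_mul, abs_of_pos ht]
        _ ≤ 1 := hts i (Finset.mem_univ i) h1
    · rw [hzm i hi, hi w hwF]; norm_num
  obtain ⟨v, hFeq⟩ := hface
  have hwF' := hwF
  rw [hFeq] at hwF'
  have hle : ∑ k, v k * u k ≤ ∑ k, v k * w k := hwF'.2 u huY
  rw [hu, dot_comb] at hle
  have hmax : ∑ k, v k * w k ≤ ∑ k, v k * z k := by nlinarith
  rw [hFeq]
  exact ⟨hz0, fun zz hzz => (hwF'.2 zz hzz).trans hmax⟩

open Matrix in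
lemma inj_of_rank (A : Matrix (Fin m) (Fin n) ℝ) (hrank : A.rank = m) (u : Fin m → ℝ)
    (h : ∀ i, colDot A i u = 0) : u = 0 := by
  have hm : Aᵀ.mulVec u = 0 := by
    funext i
    simpa [Matrix.mulVec, dotProduct, Matrix.transpose_apply, colDot] using h i
  have hker : u ∈ LinearMap.ker Aᵀ.mulVecLin := by
    rw [LinearMap.mem_ker, Matrix.mulVecLin_apply]; exact hm
  have hr : Aᵀ.rank = m := by rw [Matrix.rank_transpose]; exact hrank
  rw [Matrix.rank] at hr
  have h2 := LinearMap.finrank_range_add_finrank_ker Aᵀ.mulVecLin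
  rw [hr, Module.finrank_fin_fun] at h2
  have h3 : Module.finrank ℝ (LinearMap.ker Aᵀ.mulVecLin) = 0 := by omega
  rw [Submodule.finrank_eq_zero] at h3
  rw [h3] at hker
  simpa using hker

end
end

theorem stmt9 {m n : ℕ} (A : Matrix (Fin m) (Fin n) ℝ) (hrank : A.rank = m)
    (F : Set (Fin m → ℝ)) (hface : IsFaceOf (Ydual A) F) (hne : F.Nonempty) :
    SFace A F = {p | ∃ lam : ℝ, 0 ≤ lam ∧
      ∃ x ∈ clW (Aplus A F) (Azero A F) (Aminus A F), ∃ y ∈ F,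
        p = (lam, A.mulVec x + lam • y, x)} := by
  ext ⟨lam, b, x⟩
  simp only [SFace, Set.mem_setOf_eq]
  constructor
  · rintro ⟨hlam, hP, hZ, hM⟩
    have hxW : x ∈ clW (Aplus A F) (Azero A F) (Aminus A F) :=
      ⟨fun i hi => (hP i hi).1, fun i hi => (hZ i hi).1, fun i hi => (hM i hi).1⟩
    rcases eq_or_lt_of_le hlam with hlam0 | hlam0
    · -- lam = 0
      obtain ⟨y0, hy0⟩ := hne
      have hres : ∀ i, colDot A i (b - A.mulVec x) = 0 := by
        intro i
        rcases cover A hface i with hi | hi | hi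
        · have := (hP i hi).2; rw [← hlam0] at this; exact this
        · have := (hZ i hi).2; rw [← hlam0] at this
          exact abs_eq_zero.mp (le_antisymm this (abs_nonneg _))
        · have := (hM i hi).2; rw [← hlam0] at this; simpa [resid] using this
      have hb : b - A.mulVec x = 0 := inj_of_rank A hrank _ hres
      have hb' : b = A.mulVec x := by
        funext k; have := congrFun hb k; simpa [sub_eq_zero] using this
      exact ⟨0, le_refl 0, x, hxW, y0, hy0, by
        rw [← hlam0, hb']; simp⟩
    · -- lam > 0
      set y : Fin m → ℝ := fun k => lam⁻¹ * ((b - A.mulVec x) k) with hy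
      have hcd : ∀ i, colDot A i y = lam⁻¹ * resid A b x i := fun i => colDot_smul A i _ _
      have hyF : y ∈ F := by
        apply mem_face A hface hne
        · intro i
          rcases cover A hface i with hi | hi | hi
          · rw [hcd i, (hP i hi).2, inv_mul_cancel₀ (ne_of_gt hlam0)]; norm_num
          · rw [hcd i, abs_mul, abs_of_pos (inv_pos.mpr hlam0)]
            calc lam⁻¹ * |resid A b x i| ≤ lam⁻¹ * lam := by
                  gcongr; exact (hZ i hi).2
              _ = 1 := inv_mul_cancel₀ (ne_of_gt hlam0)
          · rw [hcd i, (hM i hi).2]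
            rw [abs_mul]
            rw [abs_of_pos (inv_pos.mpr hlam0)]
            rw [abs_neg, abs_of_pos hlam0, inv_mul_cancel₀ (ne_of_gt hlam0)]
        · intro i hi
          rw [hcd i, (hP i hi).2, inv_mul_cancel₀ (ne_of_gt hlam0)]
        · intro i hi
          rw [hcd i, (hM i hi).2, mul_neg, inv_mul_cancel₀ (ne_of_gt hlam0)]
      refine ⟨lam, hlam, x, hxW, y, hyF, ?_⟩
      have hb : b = A.mulVec x + lam • y := by
        funext k
        simp only [Pi.add_apply, Pi.smul_apply, hy, smul_eq_mul, Pi.sub_apply]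
        field_simp
        ring
      rw [← hb]
  · rintro ⟨lam', hlam', x', hx', y, hyF, heq⟩
    rw [Prod.ext_iff] at heq
    obtain ⟨rfl, heq2⟩ := heq
    rw [Prod.ext_iff] at heq2
    obtain ⟨h2, h3⟩ := heq2
    simp only at h2 h3
    subst h3
    have hres : ∀ i, resid A b x i = lam * colDot A i y := by
      intro i
      have hsub : b - A.mulVec x = fun k => lam * y k := by
        funext k
        simp only [Pi.sub_apply, h2, Pi.add_apply, Pi.smul_apply, smul_eq_mul]
        ring
      unfold resid
      rw [hsub, colDot_smul]
    refine ⟨hlam', fun i hi => ⟨hx'.1 i hi, ?_⟩, fun i hi => ⟨hx'.2.1 i hi, ?_⟩,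
      fun i hi => ⟨hx'.2.2 i hi, ?_⟩⟩
    · rw [hres i, hi y hyF, mul_one]
    · rw [hres i, abs_mul, abs_of_nonneg hlam']
      calc lam * |colDot A i y| ≤ lam * 1 := by gcongr; exact faceSub A hface hyF i
        _ = lam := mul_one lam
    · rw [hres i, hi y hyF, mul_neg_one]
end

section
/- Let A be of full row rank and let F be a nonempty face of Y⁰. The projection R_F of S_F onto the x-coordinate equals cl W(𝒜⁺(F), 𝒜⁰(F), 𝒜⁻(F)), and the ℓ₁ norm is linear on R_F: for all x ∈ R_F, ‖x‖₁ = Σ_{i∈𝒜⁺(F)} x_i − Σ_{i∈𝒜⁻(F)} x_i. -/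
open Set

/-! The sign pattern `𝒜⁺, 𝒜⁰, 𝒜⁻` of a nonempty face `F ⊆ Y⁰` covers every index, because a face
of the convex set `Y⁰` is convex: if `A_iᵀ` took both values `±1` on `F` it would vanish at a
midpoint. Any `y₀ ∈ F` then turns `x ∈ cl W` into the point `(1, Ax + y₀, x)` of `S_F`, whose
residuals are `A_iᵀ y₀`. On `cl W` each coordinate has the sign prescribed by the pattern, so
`‖x‖₁` is linear there. -/

theorem Convex.forall_eq_one_or_exists_or_forall_eq_neg_one {E : Type*} [AddCommGroup E]
    [Module ℝ E] {F : Set E} (hF : Convex ℝ F) (f : E →ₗ[ℝ] ℝ) (hf : ∀ y ∈ F, |f y| ≤ 1) :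
    (∀ y ∈ F, f y = 1) ∨ (∃ y ∈ F, -1 < f y ∧ f y < 1) ∨ (∀ y ∈ F, f y = -1) := by
  by_contra! h
  obtain ⟨⟨y₁, hy₁, hne₁⟩, hstrict, ⟨y₂, hy₂, hne₂⟩⟩ := h
  have h₁ : f y₁ = -1 := by
    obtain ⟨hlo, hhi⟩ := abs_le.1 (hf y₁ hy₁)
    rcases hlo.lt_or_eq with hlt | heq
    · exact absurd (le_antisymm hhi (hstrict y₁ hy₁ hlt)) hne₁
    · exact heq.symm
  have h₂ : f y₂ = 1 := by
    obtain ⟨hlo, hhi⟩ := abs_le.1 (hf y₂ hy₂)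
    exact le_antisymm hhi (hstrict y₂ hy₂ (lt_of_le_of_ne hlo (Ne.symm hne₂)))
  have hmid : f ((1 / 2 : ℝ) • y₁ + (1 / 2 : ℝ) • y₂) = 0 := by
    rw [map_add, map_smul, map_smul, h₁, h₂]
    norm_num
  have hmem : (1 / 2 : ℝ) • y₁ + (1 / 2 : ℝ) • y₂ ∈ F :=
    hF hy₁ hy₂ (by norm_num) (by norm_num) (by norm_num)
  have := hstrict _ hmem (by rw [hmid]; norm_num)
  rw [hmid] at this
  norm_num at this

theorem IsFaceOf.subset {m : ℕ} {C F : Set (Fin m → ℝ)} (h : IsFaceOf C F) : F ⊆ C := by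
  obtain ⟨v, rfl⟩ := h
  exact fun y hy => hy.1

theorem IsFaceOf.convex {m : ℕ} {C F : Set (Fin m → ℝ)} (hC : Convex ℝ C) (h : IsFaceOf C F) :
    Convex ℝ F := by
  obtain ⟨v, rfl⟩ := h
  rintro y ⟨hyC, hy⟩ y' ⟨hy'C, hy'⟩ a b ha hb hab
  refine ⟨hC hyC hy'C ha hb hab, fun z hz => ?_⟩
  change v ⬝ᵥ z ≤ v ⬝ᵥ (a • y + b • y')
  rw [dotProduct_add, dotProduct_smul, dotProduct_smul, smul_eq_mul, smul_eq_mul]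
  have hzy : v ⬝ᵥ z ≤ v ⬝ᵥ y := hy z hz
  have hzy' : v ⬝ᵥ z ≤ v ⬝ᵥ y' := hy' z hz
  calc v ⬝ᵥ z = a * v ⬝ᵥ z + b * v ⬝ᵥ z := by rw [← add_mul, hab, one_mul]
    _ ≤ a * v ⬝ᵥ y + b * v ⬝ᵥ y' := by gcongr

section

variable {m n : ℕ} (A : Matrix (Fin m) (Fin n) ℝ)

def colDotLinear (i : Fin n) : (Fin m → ℝ) →ₗ[ℝ] ℝ :=
  (LinearMap.proj i).comp A.vecMulLinear

theorem colDotLinear_apply (i : Fin n) (y : Fin m → ℝ) : colDotLinear A i y = colDot A i y := by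
  simp [colDotLinear, colDot, Matrix.vecMul, dotProduct, mul_comm]

theorem convex_Ydual : Convex ℝ (Ydual A) := by
  have h : Ydual A = ⋂ i, colDotLinear A i ⁻¹' Icc (-1) 1 := by
    ext y
    simp [Ydual, colDotLinear_apply, abs_le]
  rw [h]
  exact convex_iInter fun i => (convex_Icc (-1) 1).linear_preimage (colDotLinear A i)

theorem mem_Aplus_or_Azero_or_Aminus {F : Set (Fin m → ℝ)} (hF : Convex ℝ F)
    (hsub : F ⊆ Ydual A) (i : Fin n) : i ∈ Aplus A F ∨ i ∈ Azero A F ∨ i ∈ Aminus A F := by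
  simpa only [Aplus, Azero, Aminus, mem_ofPred_eq, colDotLinear_apply] using
    hF.forall_eq_one_or_exists_or_forall_eq_neg_one (colDotLinear A i) fun y hy => by
      rw [colDotLinear_apply]
      exact hsub hy i

theorem resid_mulVec_add (x : Fin n → ℝ) (y : Fin m → ℝ) (i : Fin n) :
    resid A (A.mulVec x + y) x i = colDot A i y := by
  simp [resid]

theorem image_SFace_eq_clW {F : Set (Fin m → ℝ)} (hsub : F ⊆ Ydual A) (hne : F.Nonempty) :
    (fun p : ℝ × (Fin m → ℝ) × (Fin n → ℝ) => p.2.2) '' SFace A F =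
      clW (Aplus A F) (Azero A F) (Aminus A F) := by
  apply Subset.antisymm
  · rintro _ ⟨p, ⟨-, hplus, hzero, hminus⟩, rfl⟩
    exact ⟨fun i hi => (hplus i hi).1, fun i hi => (hzero i hi).1, fun i hi => (hminus i hi).1⟩
  · obtain ⟨y₀, hy₀⟩ := hne
    rintro x ⟨hplus, hzero, hminus⟩
    refine ⟨(1, A.mulVec x + y₀, x),
      ⟨zero_le_one, fun i hi => ?_, fun i hi => ?_, fun i hi => ?_⟩, rfl⟩
    all_goals simp only [resid_mulVec_add]
    · exact ⟨hplus i hi, hi y₀ hy₀⟩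
    · exact ⟨hzero i hi, hsub hy₀ i⟩
    · exact ⟨hminus i hi, hi y₀ hy₀⟩

end

theorem l1_eq_sum_sub_sum_of_mem_clW {n : ℕ} {Ip I0 Im : Set (Fin n)} [DecidablePred (· ∈ Ip)]
    [DecidablePred (· ∈ Im)] (hcover : ∀ i, i ∈ Ip ∨ i ∈ I0 ∨ i ∈ Im) {x : Fin n → ℝ}
    (hx : x ∈ clW Ip I0 Im) :
    l1 x = (∑ i, if i ∈ Ip then x i else 0) - ∑ i, if i ∈ Im then x i else 0 := by
  obtain ⟨hplus, hzero, hminus⟩ := hx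
  rw [l1, ← Finset.sum_sub_distrib]
  refine Finset.sum_congr rfl fun i _ => ?_
  by_cases hp : i ∈ Ip <;> by_cases hm : i ∈ Im <;> simp only [hp, hm, if_true, if_false]
  · have : x i = 0 := le_antisymm (hminus i hm) (hplus i hp)
    simp [this]
  · rw [abs_of_nonneg (hplus i hp), sub_zero]
  · rw [abs_of_nonpos (hminus i hm), zero_sub]
  · rw [hzero i ((hcover i).resolve_left hp |>.resolve_right hm), abs_zero, sub_zero]

open Classical in
theorem stmt14_general {m n : ℕ} (A : Matrix (Fin m) (Fin n) ℝ)
    (F : Set (Fin m → ℝ)) (hface : IsFaceOf (Ydual A) F) (hne : F.Nonempty) :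
    ((fun p : ℝ × (Fin m → ℝ) × (Fin n → ℝ) => p.2.2) '' SFace A F =
      clW (Aplus A F) (Azero A F) (Aminus A F)) ∧
    ∀ x ∈ (fun p : ℝ × (Fin m → ℝ) × (Fin n → ℝ) => p.2.2) '' SFace A F,
      l1 x = (∑ i, if i ∈ Aplus A F then x i else 0) -
             (∑ i, if i ∈ Aminus A F then x i else 0) := by
  have hsub := hface.subset
  have hcover := mem_Aplus_or_Azero_or_Aminus A (hface.convex (convex_Ydual A)) hsub
  rw [image_SFace_eq_clW A hsub hne]
  exact ⟨rfl, fun x hx => l1_eq_sum_sub_sum_of_mem_clW hcover hx⟩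

open Classical in
theorem stmt14 {m n : ℕ} (A : Matrix (Fin m) (Fin n) ℝ) (hrank : A.rank = m)
    (F : Set (Fin m → ℝ)) (hface : IsFaceOf (Ydual A) F) (hne : F.Nonempty) :
    ((fun p : ℝ × (Fin m → ℝ) × (Fin n → ℝ) => p.2.2) '' SFace A F =
      clW (Aplus A F) (Azero A F) (Aminus A F)) ∧
    ∀ x ∈ (fun p : ℝ × (Fin m → ℝ) × (Fin n → ℝ) => p.2.2) '' SFace A F,
      l1 x = (∑ i, if i ∈ Aplus A F then x i else 0) -
             (∑ i, if i ∈ Aminus A F then x i else 0) :=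
  stmt14_general A F hface hne
end
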